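/- arXiv:2404.09749 — 3 statements merged into one kernel-verified Lean document; each statement's English description precedes it below -/
import Mathlib

section
/- Let S ⊆ ℝ^n be a semi-algebraic set defined by symmetric polynomial inequalities f_1 ≥ 0, ..., f_s ≥ 0 where each f_i has degree at most d ≤ n. If x ∈ S and a = (p_1(x), ..., p_d(x)), then the Vandermonde variety V(a) = {z ∈ ℝ^n : p_i(z) = a_i for i = 1,...,d} is entirely contained in S. -/
/-!
Write a symmetric `f` as `g(e₁, …, eₙ)` by the fundamental theorem. Giving the variable of `eⱼ`
the weight `j`, the substitution `g ↦ g(e₁, …, eₙ)` maps weighted homogeneous components to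
homogeneous components and is injective, so every monomial of `g` has weight at most `deg f`:
only `e₁, …, e_d` occur in it. By Newton's identities these are determined by `p₁, …, p_d`,
so `f` takes the same value at any two points with the same first `d` power sums.
-/

open MvPolynomial Finset

namespace MvPolynomial

variable {σ τ R : Type*}

section CommSemiring

variable [CommSemiring R]

theorem isHomogeneous_esymm [Fintype σ] (k : ℕ) : (esymm σ R k).IsHomogeneous k := by
  refine IsHomogeneous.sum _ _ _ fun t ht => ?_
  simpa [(mem_powersetCard.mp ht).2] using
    IsHomogeneous.prod t (fun i => (X i : MvPolynomial σ R)) (fun _ => 1)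
      fun i _ => isHomogeneous_X R i

variable {w : σ → ℕ} {φ : σ → MvPolynomial τ R}

theorem IsWeightedHomogeneous.isHomogeneous_aeval (hφ : ∀ i, (φ i).IsHomogeneous (w i))
    {g : MvPolynomial σ R} {m : ℕ} (hg : g.IsWeightedHomogeneous w m) :
    (aeval φ g).IsHomogeneous m := by
  rw [g.as_sum, map_sum]
  refine IsHomogeneous.sum _ _ _ fun t ht => ?_
  have hprod := (IsHomogeneous.prod t.support _ _ fun i _ => (hφ i).pow (t i)).C_mul (coeff t g)
  rw [aeval_monomial, algebraMap_eq, ← hg (mem_support_iff.mp ht), Finsupp.weight_apply]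
  simpa only [Finsupp.prod, Finsupp.sum, smul_eq_mul, mul_comm (t _)] using hprod

theorem homogeneousComponent_aeval (hφ : ∀ i, (φ i).IsHomogeneous (w i)) (m : ℕ)
    (g : MvPolynomial σ R) :
    homogeneousComponent m (aeval φ g) = aeval φ (weightedHomogeneousComponent w m g) := by
  induction g using MvPolynomial.induction_on' with
  | monomial t c =>
    have ht := isWeightedHomogeneous_monomial w t c rfl
    rw [homogeneousComponent_of_mem (ht.isHomogeneous_aeval hφ),
      weightedHomogeneousComponent_of_mem ht]
    split_ifs <;> simp
  | add p q hp hq => simp only [map_add, hp, hq]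

theorem eval_aeval (x : τ → R) (φ : σ → MvPolynomial τ R) (g : MvPolynomial σ R) :
    eval x (aeval φ g) = eval (fun i => eval x (φ i)) g :=
  eval₂Hom_bind₁ _ _ _ _

end CommSemiring

section CommRing

variable [CommRing R] [Fintype σ]

theorem weight_le_totalDegree_aeval_esymm {n : ℕ} (hn : n ≤ Fintype.card σ)
    {g : MvPolynomial (Fin n) R} {t : Fin n →₀ ℕ} (ht : t ∈ g.support) :
    Finsupp.weight (fun i : Fin n => (i : ℕ) + 1) t ≤
      (aeval (fun i : Fin n => esymm σ R (i + 1)) g).totalDegree := by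
  set w := fun i : Fin n => (i : ℕ) + 1
  by_contra! hlt
  have hcomp : weightedHomogeneousComponent w (Finsupp.weight w t) g ≠ 0 := by
    refine ne_zero_iff.mpr ⟨t, ?_⟩
    rwa [coeff_weightedHomogeneousComponent, if_pos rfl, ← mem_support_iff]
  refine hcomp (injective_iff_map_eq_zero _ |>.mp (esymmAlgHom_injective R hn) _ ?_)
  rw [← Subalgebra.coe_eq_zero, esymmAlgHom_apply,
    ← homogeneousComponent_aeval (fun i => isHomogeneous_esymm _)]
  exact homogeneousComponent_eq_zero _ _ hlt

theorem IsSymmetric.eval_eq_of_eval_esymm_eq {f : MvPolynomial σ R} (hf : f.IsSymmetric)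
    {x y : σ → R} (h : ∀ k ≤ f.totalDegree, eval x (esymm σ R k) = eval y (esymm σ R k)) :
    eval x f = eval y f := by
  obtain ⟨g, hg⟩ := esymmAlgHom_surjective R le_rfl ⟨f, hf⟩
  have hgf : aeval (fun i : Fin (Fintype.card σ) => esymm σ R (i + 1)) g = f := by
    rw [← esymmAlgHom_apply, hg]
  rw [← hgf, eval_aeval, eval_aeval]
  refine eval₂_congr _ _ _ fun {i t} hi ht => h _ ?_
  calc (i : ℕ) + 1 ≤ Finsupp.weight (fun i : Fin _ => (i : ℕ) + 1) t :=
        Finsupp.le_weight_of_ne_zero' (fun i : Fin _ => (i : ℕ) + 1) (Finsupp.mem_support_iff.mp hi)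
    _ ≤ f.totalDegree := hgf ▸ weight_le_totalDegree_aeval_esymm le_rfl (mem_support_iff.mpr ht)

variable [IsDomain R] [CharZero R]

theorem eval_esymm_eq_of_eval_psum_eq {x y : σ → R} {d : ℕ}
    (h : ∀ j ∈ Icc 1 d, eval x (psum σ R j) = eval y (psum σ R j)) {k : ℕ} (hk : k ≤ d) :
    eval x (esymm σ R k) = eval y (esymm σ R k) := by
  induction k using Nat.strong_induction_on with
  | _ k ih =>
    rcases Nat.eq_zero_or_pos k with rfl | hk0
    · simp
    have newton (v : σ → R) := congrArg (eval v) (mul_esymm_eq_sum σ R k)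
    simp only [map_mul, map_natCast, map_pow, map_neg, map_one, map_sum] at newton
    refine mul_left_cancel₀ (Nat.cast_ne_zero.mpr hk0.ne') ?_
    rw [newton x, newton y]
    congr 1
    refine sum_congr rfl fun a ha => ?_
    obtain ⟨hak, hlt⟩ := mem_filter.mp ha
    rw [HasAntidiagonal.mem_antidiagonal] at hak
    rw [ih a.1 hlt (by omega), h a.2 (mem_Icc.mpr ⟨by omega, by omega⟩)]

end CommRing

end MvPolynomial

theorem stmt2_general (n d s : ℕ) (f : Fin s → MvPolynomial (Fin n) ℝ)
    (hsym : ∀ i, (f i).IsSymmetric) (hdeg : ∀ i, (f i).totalDegree ≤ d)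
    (x : Fin n → ℝ) (hx : ∀ i, 0 ≤ eval x (f i)) (z : Fin n → ℝ)
    (hz : ∀ i : Fin d, ∑ j, z j ^ ((i : ℕ) + 1) = ∑ j, x j ^ ((i : ℕ) + 1)) :
    ∀ i, 0 ≤ eval z (f i) := by
  have hpsum : ∀ j ∈ Icc 1 d, eval z (psum (Fin n) ℝ j) = eval x (psum (Fin n) ℝ j) := by
    intro j hj
    obtain ⟨h1, h2⟩ := mem_Icc.mp hj
    simpa [psum, Nat.sub_add_cancel h1] using hz ⟨j - 1, by omega⟩
  intro i
  rw [(hsym i).eval_eq_of_eval_esymm_eq fun k hk =>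
    eval_esymm_eq_of_eval_psum_eq hpsum (hk.trans (hdeg i))]
  exact hx i

theorem stmt2 (n d s : ℕ) (hd : d ≤ n) (f : Fin s → MvPolynomial (Fin n) ℝ)
    (hsym : ∀ i, (f i).IsSymmetric) (hdeg : ∀ i, (f i).totalDegree ≤ d)
    (x : Fin n → ℝ) (hx : ∀ i, 0 ≤ eval x (f i)) (z : Fin n → ℝ)
    (hz : ∀ i : Fin d, ∑ j, z j ^ ((i : ℕ) + 1) = ∑ j, x j ^ ((i : ℕ) + 1)) :
    ∀ i, 0 ≤ eval z (f i) :=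
  stmt2_general n d s f hsym hdeg x hx z hz
end

section
/- Any minimizer (or maximizer) of p_{d+1} on the Vandermonde variety V(a) = {x ∈ ℝ^n : p_1(x) = a_1, ..., p_d(x) = a_d}, assuming V(a) is compact and nonempty, has at most d distinct coordinates. -/
/-!
Lagrange multipliers at the extremum `x` give `(Λ, Λ₀) ≠ 0` with
`∑ i, Λ i • d(p_(i+1)) + Λ₀ • d(p_(d+1)) = 0` at `x`. Evaluated in the `j`-th coordinate
direction this says that `x j` is a root of `Q'`, where `Q = ∑ i, Λ i X^(i+1) + Λ₀ X^(d+1)`.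
Since `Q` has no constant term and is nonzero, `Q'` is a nonzero polynomial of degree at most
`d`, so it has at most `d` distinct roots.
-/

open Polynomial

theorem card_image_le_natDegree_of_isRoot {R ι : Type*} [CommRing R] [IsDomain R]
    [DecidableEq R] [Fintype ι] {p : R[X]} (hp : p ≠ 0) {x : ι → R}
    (hx : ∀ j, p.IsRoot (x j)) : (Finset.univ.image x).card ≤ p.natDegree := by
  refine card_le_degree_of_subset_roots fun t ht => ?_
  obtain ⟨j, -, rfl⟩ := Finset.mem_image.1 ht
  exact (mem_roots hp).2 (hx j)

theorem hasStrictFDerivAt_sum_pow_succ {ι : Type*} [Fintype ι] (m : ℕ) (x : ι → ℝ) :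
    HasStrictFDerivAt (fun y : ι → ℝ => ∑ j, y j ^ (m + 1))
      (∑ j, ((m + 1 : ℝ) * x j ^ m) • (ContinuousLinearMap.proj j : (ι → ℝ) →L[ℝ] ℝ)) x := by
  refine HasStrictFDerivAt.fun_sum fun j _ => ?_
  have hpow : HasStrictDerivAt (fun t : ℝ => t ^ (m + 1)) ((m + 1 : ℝ) * x j ^ m) (x j) := by
    simpa using hasStrictDerivAt_pow (m + 1) (x j)
  exact hpow.comp_hasStrictFDerivAt x (hasStrictFDerivAt_apply (𝕜 := ℝ) j x)

noncomputable def multiplierPoly {d : ℕ} (Λ : Fin d → ℝ) (Λ₀ : ℝ) : ℝ[X] :=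
  ∑ i, C (Λ i) * X ^ ((i : ℕ) + 1) + C Λ₀ * X ^ (d + 1)

namespace multiplierPoly

variable {d : ℕ} (Λ : Fin d → ℝ) (Λ₀ : ℝ)

theorem coeff_succ (i : Fin d) : (multiplierPoly Λ Λ₀).coeff ((i : ℕ) + 1) = Λ i := by
  simp [multiplierPoly, Fin.val_inj, i.isLt.ne]

theorem coeff_top : (multiplierPoly Λ Λ₀).coeff (d + 1) = Λ₀ := by
  simpa [multiplierPoly] using Finset.sum_eq_zero fun (i : Fin d) _ => if_neg i.isLt.ne'

theorem natDegree_le : (multiplierPoly Λ Λ₀).natDegree ≤ d + 1 :=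
  natDegree_add_le_of_degree_le
    (natDegree_sum_le_of_forall_le _ _ fun i _ =>
      (natDegree_C_mul_X_pow_le _ _).trans (by omega))
    (natDegree_C_mul_X_pow_le _ _)

theorem derivative_ne_zero (h : (Λ, Λ₀) ≠ 0) : derivative (multiplierPoly Λ Λ₀) ≠ 0 := by
  intro h0
  have hcoeff (k : ℕ) : (multiplierPoly Λ Λ₀).coeff (k + 1) = 0 := by
    simpa [coeff_derivative, Nat.cast_add_one_ne_zero] using congrArg (coeff · k) h0
  refine h (Prod.ext (funext fun i => ?_) ?_)
  · simpa [coeff_succ] using hcoeff i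
  · simpa [coeff_top] using hcoeff d

theorem natDegree_derivative_le : (derivative (multiplierPoly Λ Λ₀)).natDegree ≤ d :=
  (Polynomial.natDegree_derivative_le _).trans (by have := natDegree_le Λ Λ₀; omega)

theorem eval_derivative (t : ℝ) : (derivative (multiplierPoly Λ Λ₀)).eval t
    = ∑ i, Λ i * (((i : ℕ) + 1) * t ^ (i : ℕ)) + Λ₀ * ((d + 1) * t ^ d) := by
  simp [multiplierPoly, eval_finsetSum]

end multiplierPoly

theorem card_image_le_of_isLocalExtrOn_powerSum {ι : Type*} [Fintype ι] {d : ℕ}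
    {x : ι → ℝ} (hx : IsLocalExtrOn (fun y : ι → ℝ => ∑ j, y j ^ (d + 1))
      {y | ∀ i : Fin d, ∑ j, y j ^ ((i : ℕ) + 1) = ∑ j, x j ^ ((i : ℕ) + 1)} x) :
    (Finset.univ.image x).card ≤ d := by
  classical
  obtain ⟨Λ, Λ₀, hΛ, hmult⟩ := hx.exists_multipliers_of_hasStrictFDerivAt
    (fun i => hasStrictFDerivAt_sum_pow_succ (i : ℕ) x) (hasStrictFDerivAt_sum_pow_succ d x)
  have hroot (k : ι) : (derivative (multiplierPoly Λ Λ₀)).IsRoot (x k) := by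
    simpa [multiplierPoly.eval_derivative, Pi.single_apply] using congr($hmult (Pi.single k 1))
  calc (Finset.univ.image x).card
      ≤ (derivative (multiplierPoly Λ Λ₀)).natDegree :=
        card_image_le_natDegree_of_isRoot (multiplierPoly.derivative_ne_zero Λ Λ₀ hΛ) hroot
    _ ≤ d := multiplierPoly.natDegree_derivative_le Λ Λ₀

theorem stmt15_general (n d : ℕ) (a : Fin d → ℝ) (V : Set (Fin n → ℝ))
    (hV : V = {x | ∀ i : Fin d, ∑ j, x j ^ ((i : ℕ) + 1) = a i})
    (x : Fin n → ℝ) (hx : x ∈ V)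
    (hext : IsMinOn (fun y => ∑ j, y j ^ (d + 1)) V x ∨
            IsMaxOn (fun y => ∑ j, y j ^ (d + 1)) V x) :
    (Finset.univ.image x).card ≤ d := by
  have hVx : V = {y | ∀ i : Fin d, ∑ j, y j ^ ((i : ℕ) + 1) = ∑ j, x j ^ ((i : ℕ) + 1)} := by
    subst hV
    congr! 4 with y i
    exact (hx i).symm
  refine card_image_le_of_isLocalExtrOn_powerSum ?_
  rw [← hVx]
  exact hext.imp IsMinOn.localize IsMaxOn.localize

theorem stmt15 (n d : ℕ) (a : Fin d → ℝ) (V : Set (Fin n → ℝ))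
    (hV : V = {x | ∀ i : Fin d, ∑ j, x j ^ ((i : ℕ) + 1) = a i})
    (hcomp : IsCompact V) (hne : V.Nonempty) (x : Fin n → ℝ) (hx : x ∈ V)
    (hext : IsMinOn (fun y => ∑ j, y j ^ (d + 1)) V x ∨
            IsMaxOn (fun y => ∑ j, y j ^ (d + 1)) V x) :
    (Finset.univ.image x).card ≤ d :=
  stmt15_general n d a V hV x hx hext
end

section
/- Suppose the Vandermonde variety V(a) ∩ W_c is nonempty and connected for a ∈ ℝ^d, and let S ⊆ ℝ^n be defined by symmetric polynomials of degree at most d ≤ n. If x, y ∈ S ∩ W_c satisfy p_i(x) = p_i(y) = a_i for i = 1, ..., d, then x and y lie in the same connected component of S ∩ W_c. -/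
/-!
A symmetric polynomial of degree at most `d` is a polynomial in the elementary symmetric
polynomials `e_1, …, e_d`: subtracting the product of `e_i`'s with the same lexicographic leading
term lowers the leading term without raising the degree. Over a field of characteristic zero,
Newton's identities determine `e_1, …, e_d` from `p_1, …, p_d`. Hence every defining polynomial of
`S` is constant on `V(a)`, and `V(a) ∩ W_c` is a connected subset of `S ∩ W_c` through `x` and `y`.
-/

open MvPolynomial AddMonoidAlgebra Finset

theorem Fin.sum_accumulate {n m : ℕ} (hnm : n ≤ m) (t : Fin n → ℕ) :
    ∑ j : Fin m, Fin.accumulate n m t j = ∑ i : Fin n, ((i : ℕ) + 1) * t i := by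
  simp only [Fin.accumulate_apply, sum_filter]
  rw [sum_comm]
  refine sum_congr rfl fun i _ => ?_
  rw [← sum_filter, Finset.sum_const, smul_eq_mul]
  congr 1
  have : ({j : Fin m | (j : ℕ) ≤ i} : Finset (Fin m)) = Iic ⟨i, i.2.trans_le hnm⟩ := by
    ext j; simp [Fin.le_def]
  rw [this, Fin.card_Iic]

namespace MvPolynomial

variable {σ R : Type*} [Fintype σ]

theorem totalDegree_esymm_le [CommSemiring R] (k : ℕ) : (esymm σ R k).totalDegree ≤ k := by
  refine (totalDegree_finsetSum _ _).trans <| Finset.sup_le fun s hs => ?_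
  refine (totalDegree_finsetProd _ _).trans ?_
  calc ∑ i ∈ s, (X i : MvPolynomial σ R).totalDegree
      ≤ ∑ _i ∈ s, 1 := sum_le_sum fun i _ => by
        simpa [X] using totalDegree_monomial_le (Finsupp.single i 1) (1 : R)
    _ = k := by rw [Finset.sum_const, smul_eq_mul, mul_one, (mem_powersetCard.1 hs).2]

section CommSemiring

variable [CommSemiring R] {n d : ℕ}

theorem totalDegree_esymmAlgHomMonomial_le (t : Fin n →₀ ℕ) (r : R) :
    (esymmAlgHomMonomial σ t r).totalDegree ≤ ∑ i : Fin n, ((i : ℕ) + 1) * t i := by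
  rw [esymmAlgHomMonomial, esymmAlgHom_apply, aeval_monomial, algebraMap_eq, Finsupp.prod]
  refine (totalDegree_mul _ _).trans ?_
  rw [totalDegree_C, zero_add]
  refine (totalDegree_finsetProd _ _).trans <|
    (sum_le_sum fun i _ => ?_).trans (sum_le_sum_of_subset (subset_univ t.support))
  calc (esymm σ R ((i : ℕ) + 1) ^ t i).totalDegree
      ≤ t i * (esymm σ R ((i : ℕ) + 1)).totalDegree := totalDegree_pow _ _
    _ ≤ ((i : ℕ) + 1) * t i := by rw [mul_comm]; gcongr; exact totalDegree_esymm_le _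

theorem esymmAlgHomMonomial_mem_adjoin_esymm {t : Fin n →₀ ℕ} (r : R)
    (ht : ∑ i : Fin n, ((i : ℕ) + 1) * t i ≤ d) :
    esymmAlgHomMonomial σ t r ∈ Algebra.adjoin R (esymm σ R '' Set.Icc 1 d) := by
  rw [esymmAlgHomMonomial, esymmAlgHom_apply, aeval_monomial, Finsupp.prod]
  refine mul_mem (Subalgebra.algebraMap_mem _ r) <| prod_mem fun i hi => pow_mem ?_ _
  refine Algebra.subset_adjoin ⟨(i : ℕ) + 1, ⟨le_add_self, ?_⟩, rfl⟩
  calc (i : ℕ) + 1 ≤ ((i : ℕ) + 1) * t i :=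
        Nat.le_mul_of_pos_right _ (Nat.pos_of_ne_zero (Finsupp.mem_support_iff.mp hi))
    _ ≤ _ := single_le_sum (f := fun i : Fin n => ((i : ℕ) + 1) * t i) (by simp) (mem_univ i)
    _ ≤ d := ht

end CommSemiring

theorem IsSymmetric.mem_adjoin_esymm_of_totalDegree_le [CommRing R] {n d : ℕ}
    {p : MvPolynomial (Fin n) R} (hp : p.IsSymmetric) (hdeg : p.totalDegree ≤ d) :
    p ∈ Algebra.adjoin R (esymm (Fin n) R '' Set.Icc 1 d) := by
  obtain rfl | h0 := eq_or_ne p 0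
  · exact zero_mem _
  induction he : p.supDegree toLex using WellFoundedLT.induction generalizing p with | _ μ ih
  subst he
  have hlc : p.leadingCoeff toLex ≠ 0 := by rwa [Ne, leadingCoeff_eq_zero toLex.injective]
  set ν := ofLex (p.supDegree toLex)
  set t : Fin n →₀ ℕ := Finsupp.equivFunOnFinite.symm (Fin.invAccumulate n n ν)
  set q := esymmAlgHomMonomial (Fin n) t (p.leadingCoeff toLex)
  have hacc : Fin.accumulate n n t = ν :=
    Fin.accumulate_invAccumulate le_rfl hp.antitone_supDegree
  have hweight : ∑ i : Fin n, ((i : ℕ) + 1) * t i ≤ d := by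
    have hν : ν ∈ p.support := by rw [mem_support_iff, ← leadingCoeff_toLex]; exact hlc
    rw [← Fin.sum_accumulate le_rfl, hacc]
    simpa [Finsupp.sum_fintype] using (le_totalDegree hν).trans hdeg
  have hq : q ∈ Algebra.adjoin R (esymm (Fin n) R '' Set.Icc 1 d) :=
    esymmAlgHomMonomial_mem_adjoin_esymm _ hweight
  by_cases hpq : p = q
  · rwa [hpq]
  -- `q` has the same leading term as `p`, so `p - q` is smaller in the lexicographic order
  have hsup : q.supDegree toLex = p.supDegree toLex := by
    rw [← ofLex_inj, DFunLike.ext'_iff, supDegree_esymmAlgHomMonomial hlc t le_rfl, hacc]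
  have hlt := (supDegree_sub_lt_of_leadingCoeff_eq toLex.injective hsup.symm
    (leadingCoeff_esymmAlgHomMonomial t le_rfl).symm).resolve_right hpq
  have hsub : p - q ∈ Algebra.adjoin R (esymm (Fin n) R '' Set.Icc 1 d) :=
    ih _ hlt (hp.sub (isSymmetric_esymmAlgHomMonomial _ _))
      ((totalDegree_sub p q).trans (max_le hdeg ((totalDegree_esymmAlgHomMonomial_le _ _).trans
        hweight))) (sub_ne_zero.mpr hpq) rfl
  simpa only [sub_add_cancel] using add_mem hsub hq

theorem map_esymm_eq_of_map_psum_eq [CommRing R] {S : Type*} [CommRing S] [IsDomain S]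
    [CharZero S] {φ ψ : MvPolynomial σ R →+* S} {d : ℕ}
    (h : ∀ m ∈ Set.Icc 1 d, φ (psum σ R m) = ψ (psum σ R m)) {k : ℕ} (hk : k ≤ d) :
    φ (esymm σ R k) = ψ (esymm σ R k) := by
  induction k using Nat.strong_induction_on with | _ k ih
  obtain rfl | hk0 := Nat.eq_zero_or_pos k
  · simp [esymm_zero]
  have hsum : φ (∑ a ∈ antidiagonal k with a.1 < k, (-1) ^ a.1 * esymm σ R a.1 * psum σ R a.2) =
      ψ (∑ a ∈ antidiagonal k with a.1 < k, (-1) ^ a.1 * esymm σ R a.1 * psum σ R a.2) := by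
    simp only [map_sum, map_mul, map_pow, map_neg, map_one]
    refine sum_congr rfl fun a ha => ?_
    rw [mem_filter, HasAntidiagonal.mem_antidiagonal] at ha
    rw [ih a.1 ha.2 (by omega), h a.2 ⟨by omega, by omega⟩]
  refine mul_left_cancel₀ (Nat.cast_ne_zero.2 hk0.ne' : (k : S) ≠ 0) ?_
  calc (k : S) * φ (esymm σ R k) = φ ((-1) ^ (k + 1)) * φ (∑ a ∈ antidiagonal k with a.1 < k,
        (-1) ^ a.1 * esymm σ R a.1 * psum σ R a.2) := by
        rw [← map_mul, ← mul_esymm_eq_sum, map_mul, map_natCast]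
    _ = (k : S) * ψ (esymm σ R k) := by
        rw [hsum, ← map_natCast ψ, ← map_mul, mul_esymm_eq_sum, map_mul]
        simp only [map_pow, map_neg, map_one]

theorem IsSymmetric.eval_eq_of_eval_psum_eq [CommRing R] [IsDomain R] [CharZero R] {n d : ℕ}
    {p : MvPolynomial (Fin n) R} (hp : p.IsSymmetric) (hdeg : p.totalDegree ≤ d)
    {z x : Fin n → R} (h : ∀ m ∈ Set.Icc 1 d, eval z (psum _ R m) = eval x (psum _ R m)) :
    eval z p = eval x p := by
  have hesymm : Set.EqOn (aeval z) (aeval x) (esymm (Fin n) R '' Set.Icc 1 d) := by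
    rintro _ ⟨k, hk, rfl⟩
    exact map_esymm_eq_of_map_psum_eq (φ := eval z) (ψ := eval x) h hk.2
  exact AlgHom.eqOn_adjoin_iff.2 hesymm (hp.mem_adjoin_esymm_of_totalDegree_le hdeg)

end MvPolynomial

theorem stmt19_general (n d s : ℕ) (f : Fin s → MvPolynomial (Fin n) ℝ)
    (hsym : ∀ i, (f i).IsSymmetric) (hdeg : ∀ i, (f i).totalDegree ≤ d)
    (S : Set (Fin n → ℝ)) (hS : S = {x | ∀ i, 0 ≤ eval x (f i)})
    (Wc : Set (Fin n → ℝ))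
    (a : Fin d → ℝ)
    (hconn : IsConnected ({z | ∀ i : Fin d, ∑ j, z j ^ ((i : ℕ) + 1) = a i} ∩ Wc))
    (x y : Fin n → ℝ) (hx : x ∈ S ∩ Wc) (hy : y ∈ S ∩ Wc)
    (hax : ∀ i : Fin d, ∑ j, x j ^ ((i : ℕ) + 1) = a i)
    (hay : ∀ i : Fin d, ∑ j, y j ^ ((i : ℕ) + 1) = a i) :
    y ∈ connectedComponentIn (S ∩ Wc) x := by
  refine hconn.isPreconnected.subset_connectedComponentIn ⟨hax, hx.2⟩ ?_ ⟨hay, hy.2⟩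
  rintro z ⟨hz, hzW⟩
  have hpsum : ∀ m ∈ Set.Icc 1 d, eval z (psum _ ℝ m) = eval x (psum _ ℝ m) := by
    rintro m ⟨hm1, hmd⟩
    obtain ⟨i, rfl⟩ : ∃ i : Fin d, m = (i : ℕ) + 1 :=
      ⟨⟨m - 1, by omega⟩, (Nat.sub_add_cancel hm1).symm⟩
    simp only [psum, map_sum, map_pow, eval_X, hz i, hax i]
  subst hS
  exact ⟨fun i => (hsym i).eval_eq_of_eval_psum_eq (hdeg i) hpsum ▸ hx.1 i, hzW⟩

theorem stmt19 (n d s : ℕ) (hd : d ≤ n) (f : Fin s → MvPolynomial (Fin n) ℝ)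
    (hsym : ∀ i, (f i).IsSymmetric) (hdeg : ∀ i, (f i).totalDegree ≤ d)
    (S : Set (Fin n → ℝ)) (hS : S = {x | ∀ i, 0 ≤ eval x (f i)})
    (Wc : Set (Fin n → ℝ)) (hW : Wc = {x | Monotone x})
    (a : Fin d → ℝ)
    (hconn : IsConnected ({z | ∀ i : Fin d, ∑ j, z j ^ ((i : ℕ) + 1) = a i} ∩ Wc))
    (x y : Fin n → ℝ) (hx : x ∈ S ∩ Wc) (hy : y ∈ S ∩ Wc)
    (hax : ∀ i : Fin d, ∑ j, x j ^ ((i : ℕ) + 1) = a i)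
    (hay : ∀ i : Fin d, ∑ j, y j ^ ((i : ℕ) + 1) = a i) :
    y ∈ connectedComponentIn (S ∩ Wc) x :=
  stmt19_general n d s f hsym hdeg S hS Wc a hconn x y hx hy hax hay
end
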